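/- Let a > 0, b > 0, c ∈ ℝ and h : I → ℝ a solution of (h')² = (a-h²)((a-h²) - b(1+(h-c)²)) with a - h(x)² > 0 on I (ε = 1). Define φ as in the rotationally invariant example: φ(x,y) = (1/√a)(√(a-h²)cos(√a y), √(a-h²)sin(√a y), h). Then |φ_x|² = (a-h²) - b(1+(h-c)²), so that if ψ is any curve with |ψ'(x)|² = b(1+(h(x)-c)²), the product map Φ = (φ, ψ(x)) : I×ℝ → S²×S² satisfies |Φ_x|² = |Φ_y|² = a - h(x)² and ⟨Φ_x, Φ_y⟩ = 0, i.e. Φ is conformal. -/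

import Mathlib

/-- Euclidean dot product on ℝ³. -/
def edot (u v : Fin 3 → ℝ) : ℝ := u 0 * v 0 + u 1 * v 1 + u 2 * v 2

/-- Let `h` solve `(h')² = (a-h²)((a-h²) - b(1+(h-c)²))` with `a - h² > 0`
(case ε = 1), let `φ` be the rotationally invariant map into S², and let `ψ`
be any curve in S² with `|ψ'(x)|² = b(1+(h x - c)²)`. Then
`|φ_x|² = (a-h²) - b(1+(h-c)²)`, and the product map `Φ = (φ, ψ(x))` into
S²×S² satisfies `|Φ_x|² = |Φ_y|² = a - h²` and `⟨Φ_x, Φ_y⟩ = 0`, i.e. `Φ` is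
conformal. -/
theorem stmt15 (a b c : ℝ) (ha : 0 < a) (hb : 0 < b)
    (h : ℝ → ℝ) (hh : ContDiff ℝ (⊤ : ℕ∞) h)
    (hODE : ∀ x, (deriv h x) ^ 2 =
      (a - h x ^ 2) * ((a - h x ^ 2) - b * (1 + (h x - c) ^ 2)))
    (hpos : ∀ x, 0 < a - h x ^ 2)
    (φ : ℝ → ℝ → Fin 3 → ℝ)
    (hφ : φ = fun x y => fun i => (1 / Real.sqrt a) *
      (![Real.sqrt (a - h x ^ 2) * Real.cos (Real.sqrt a * y),
         Real.sqrt (a - h x ^ 2) * Real.sin (Real.sqrt a * y),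
         h x] i))
    (ψ : ℝ → Fin 3 → ℝ) (hψdiff : ContDiff ℝ (⊤ : ℕ∞) ψ)
    (hψS : ∀ x, edot (ψ x) (ψ x) = 1)
    (hψspeed : ∀ x, edot (deriv ψ x) (deriv ψ x) = b * (1 + (h x - c) ^ 2)) :
    (∀ x y, edot (deriv (fun t => φ t y) x) (deriv (fun t => φ t y) x)
      = (a - h x ^ 2) - b * (1 + (h x - c) ^ 2)) ∧
    (∀ x y, edot (deriv (fun t => φ t y) x) (deriv (fun t => φ t y) x)
      + edot (deriv ψ x) (deriv ψ x) = a - h x ^ 2) ∧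
    (∀ x y, edot (deriv (fun t => φ x t) y) (deriv (fun t => φ x t) y)
      = a - h x ^ 2) ∧
    (∀ x y, edot (deriv (fun t => φ t y) x) (deriv (fun t => φ x t) y) = 0) := by
  have hsa : (0:ℝ) < Real.sqrt a := Real.sqrt_pos.mpr ha
  have hsa2 : Real.sqrt a ^ 2 = a := Real.sq_sqrt ha.le
  have hh' : ∀ x, HasDerivAt h (deriv h x) x := fun x =>
    ((hh.differentiable (by simp)) x).hasDerivAt
  -- derivative in x
  have hdx : ∀ x y, deriv (fun t => φ t y) x =
      ![(1 / Real.sqrt a) * ((-(2 * h x * deriv h x) / (2 * Real.sqrt (a - h x ^ 2))) * Real.cos (Real.sqrt a * y)),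
        (1 / Real.sqrt a) * ((-(2 * h x * deriv h x) / (2 * Real.sqrt (a - h x ^ 2))) * Real.sin (Real.sqrt a * y)),
        (1 / Real.sqrt a) * deriv h x] := by
    intro x y
    have hg : HasDerivAt (fun t => a - h t ^ 2) (-(2 * h x * deriv h x)) x := by
      have := ((hh' x).pow 2).const_sub a
      simpa [mul_comm, mul_assoc, mul_left_comm] using this
    have hs : HasDerivAt (fun t => Real.sqrt (a - h t ^ 2))
        (-(2 * h x * deriv h x) / (2 * Real.sqrt (a - h x ^ 2))) x :=
      hg.sqrt (ne_of_gt (hpos x))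
    apply HasDerivAt.deriv
    rw [hasDerivAt_pi]
    intro i
    fin_cases i <;> simp only [hφ, Matrix.cons_val_zero, Matrix.cons_val_one, Matrix.head_cons,
      Matrix.cons_val_fin_one, Fin.isValue]
    · exact ((hs.mul_const _).const_mul _)
    · exact ((hs.mul_const _).const_mul _)
    · exact ((hh' x).const_mul _)
  -- derivative in y
  have hdy : ∀ x y, deriv (fun t => φ x t) y =
      ![(1 / Real.sqrt a) * (Real.sqrt (a - h x ^ 2) * (-Real.sin (Real.sqrt a * y) * Real.sqrt a)),
        (1 / Real.sqrt a) * (Real.sqrt (a - h x ^ 2) * (Real.cos (Real.sqrt a * y) * Real.sqrt a)),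
        0] := by
    intro x y
    have hlin : HasDerivAt (fun t : ℝ => Real.sqrt a * t) (Real.sqrt a) y := by
      simpa using (hasDerivAt_id y).const_mul (Real.sqrt a)
    have hcos : HasDerivAt (fun t => Real.cos (Real.sqrt a * t))
        (-Real.sin (Real.sqrt a * y) * Real.sqrt a) y :=
      (Real.hasDerivAt_cos _).comp y hlin
    have hsin : HasDerivAt (fun t => Real.sin (Real.sqrt a * t))
        (Real.cos (Real.sqrt a * y) * Real.sqrt a) y :=
      (Real.hasDerivAt_sin _).comp y hlin
    apply HasDerivAt.deriv
    rw [hasDerivAt_pi]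
    intro i
    fin_cases i <;> simp only [hφ, Matrix.cons_val_zero, Matrix.cons_val_one, Matrix.head_cons,
      Matrix.cons_val_fin_one, Fin.isValue]
    · exact ((hcos.const_mul (Real.sqrt (a - h x ^ 2))).const_mul (1 / Real.sqrt a))
    · exact ((hsin.const_mul (Real.sqrt (a - h x ^ 2))).const_mul (1 / Real.sqrt a))
    · exact hasDerivAt_const y ((1 : ℝ) / Real.sqrt a * h x)
  have key1 : ∀ x y, edot (deriv (fun t => φ t y) x) (deriv (fun t => φ t y) x)
      = (a - h x ^ 2) - b * (1 + (h x - c) ^ 2) := by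
    intro x y
    have hp := hpos x
    have hs2 : Real.sqrt (a - h x ^ 2) ^ 2 = a - h x ^ 2 := Real.sq_sqrt hp.le
    have hsp : (0:ℝ) < Real.sqrt (a - h x ^ 2) := Real.sqrt_pos.mpr hp
    have hcs : Real.cos (Real.sqrt a * y) ^ 2 + Real.sin (Real.sqrt a * y) ^ 2 = 1 :=
      Real.cos_sq_add_sin_sq _
    rw [hdx x y]
    simp only [edot, Matrix.cons_val_zero, Matrix.cons_val_one, Matrix.head_cons, Matrix.cons_val_two, Matrix.tail_cons]
    have hode := hODE x
    field_simp
    linear_combination ((deriv h x) ^ 2 * (h x) ^ 2) * hcs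
      + ((deriv h x) ^ 2 - a * (a - h x ^ 2 - b * (1 + (h x - c) ^ 2))) * hs2
      + a * hode
      - (Real.sqrt (a - h x ^ 2) ^ 2 * (a - h x ^ 2 - b * (1 + (h x - c) ^ 2))) * hsa2
  refine ⟨key1, ?_, ?_, ?_⟩
  · intro x y
    rw [key1 x y, hψspeed x]; ring
  · intro x y
    have hp := hpos x
    have hs2 : Real.sqrt (a - h x ^ 2) ^ 2 = a - h x ^ 2 := Real.sq_sqrt hp.le
    have hcs : Real.cos (Real.sqrt a * y) ^ 2 + Real.sin (Real.sqrt a * y) ^ 2 = 1 :=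
      Real.cos_sq_add_sin_sq _
    rw [hdy x y]
    simp only [edot, Matrix.cons_val_zero, Matrix.cons_val_one, Matrix.head_cons, Matrix.cons_val_two, Matrix.tail_cons]
    field_simp
    linear_combination (Real.sqrt (a - h x ^ 2) ^ 2) * hcs + hs2
  · intro x y
    rw [hdx x y, hdy x y]
    simp only [edot, Matrix.cons_val_zero, Matrix.cons_val_one, Matrix.head_cons, Matrix.cons_val_two, Matrix.tail_cons]
    ring
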